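/- For f, g ∈ Map([0,1],[0,1]), define (f ⊔ g)(x) = sup{min(f(y), g(z)) : max(y,z) = x}. Then (f ⊔ g)(x) = min( max(f(x), g(x)), min(f^L(x), g^L(x)) ) for all x ∈ [0,1]. -/
import Mathlib


open unitInterval

instance : Fact ((0:ℝ) ≤ 1) := ⟨zero_le_one⟩

/-- `f^L x = sup {f y : y ≤ x}` -/
noncomputable def fL (f : I → I) (x : I) : I := sSup (f '' {y | y ≤ x})

/-- `f^R x = sup {f y : y ≥ x}` -/
noncomputable def fR (f : I → I) (x : I) : I := sSup (f '' {y | x ≤ y})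

/-- join convolution `(f ⊔ g)(x) = sup { min (f y) (g z) : max y z = x }` -/
noncomputable def joinConv (f g : I → I) (x : I) : I :=
  sSup {v | ∃ y z, y ⊔ z = x ∧ v = f y ⊓ g z}

theorem stmt_8 (f g : I → I) (x : I) :
    joinConv f g x = (f x ⊔ g x) ⊓ (fL f x ⊓ fL g x) := by
  apply le_antisymm
  · apply sSup_le
    rintro v ⟨y, z, hyz, rfl⟩
    have hy : y ≤ x := hyz ▸ le_sup_left
    have hz : z ≤ x := hyz ▸ le_sup_right
    have h1 : f y ≤ fL f x := le_sSup ⟨y, hy, rfl⟩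
    have h2 : g z ≤ fL g x := le_sSup ⟨z, hz, rfl⟩
    refine le_inf ?_ (le_inf (inf_le_left.trans h1) (inf_le_right.trans h2))
    rcases le_total y z with h | h
    · have hzx : z = x := by rw [← hyz, sup_eq_right.mpr h]
      exact inf_le_right.trans (hzx ▸ le_sup_right)
    · have hyx : y = x := by rw [← hyz, sup_eq_left.mpr h]
      exact inf_le_left.trans (hyx ▸ le_sup_left)
  · rcases le_total (g x) (f x) with h | h
    · have : (f x ⊔ g x) ⊓ (fL f x ⊓ fL g x) ≤ f x ⊓ fL g x := by
        rw [sup_eq_left.mpr h]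
        exact inf_le_inf_left _ inf_le_right
      refine this.trans ?_
      rw [fL, inf_sSup_eq]
      apply iSup_le; intro b; apply iSup_le; rintro ⟨z, hz, rfl⟩
      exact le_sSup ⟨x, z, sup_eq_left.mpr hz, rfl⟩
    · have : (f x ⊔ g x) ⊓ (fL f x ⊓ fL g x) ≤ fL f x ⊓ g x :=
        le_inf (inf_le_right.trans inf_le_left)
          (by rw [sup_eq_right.mpr h]; exact inf_le_left)
      refine this.trans ?_
      rw [fL, sSup_inf_eq]
      apply iSup_le; intro b; apply iSup_le; rintro ⟨y, hy, rfl⟩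
      exact le_sSup ⟨y, x, sup_eq_right.mpr hy, rfl⟩
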